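/- arXiv:1406.2405 — 3 statements merged into one kernel-verified Lean document; each statement's English description precedes it below -/
import Mathlib

section
/- Suppose there exist α ∈ (0,1) and real numbers c_1, …, c_n such that for every i ∈ I: 1 + α c_i > 0 and −B_i + ((−α − 1)/2)·σ_i² + Σ_{j ≠ i} q_{ij}·(c_i − c_j)/(1 + α c_i) > 0 (Assumption (ii), used for instability of the vertex x = 0). Let V(x,i) = (1 + α c_i)·x^{−α}. Then there exists δ ∈ (0,1) such that for every i ∈ I and every x ∈ (0,δ), (L V)(x,i) < 0. -/
/-!
For `V(x, i) = k_i x^p` the generator factors as `L V (x, i) = x^p F_i(x)` with `F_i` a polynomial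
in `x`. With `p = -α` and `k_i = 1 + α c_i`, the value `F_i(0)` is `-α k_i` times the quantity of
Assumption (ii), hence negative; by continuity each `F_i` stays negative near `0`, and there are
only finitely many `i`.
-/

open Finset Real

/-- The switched replicator generator. -/
noncomputable def switchedGen {n : ℕ} (A B σ : Fin n → ℝ) (q : Fin n → Fin n → ℝ)
    (V : ℝ → Fin n → ℝ) (x : ℝ) (i : Fin n) : ℝ :=
  x * (1 - x) * (-B i + (A i + B i) * x) * deriv (fun y => V y i) x
    + (σ i ^ 2 / 2) * x ^ 2 * (1 - x) ^ 2 * deriv (deriv (fun y => V y i)) x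
    + ∑ j ∈ Finset.univ.filter (fun j => j ≠ i), q i j * (V x j - V x i)

open Topology

lemma deriv_const_mul_rpow (a p : ℝ) :
    deriv (fun y : ℝ => a * y ^ p) = fun x => a * p * x ^ (p - 1) := by
  rw [deriv_const_mul_field', Real.deriv_rpow_const']
  simp only [mul_assoc]

noncomputable def rpowGenFactor {n : ℕ} (A B σ : Fin n → ℝ) (q : Fin n → Fin n → ℝ)
    (k : Fin n → ℝ) (p x : ℝ) (i : Fin n) : ℝ :=
  p * k i * ((1 - x) * (-B i + (A i + B i) * x) + (p - 1) / 2 * σ i ^ 2 * (1 - x) ^ 2)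
    + ∑ j ∈ Finset.univ.filter (fun j => j ≠ i), q i j * (k j - k i)

section rpowGenFactor

variable {n : ℕ} (A B σ : Fin n → ℝ) (q : Fin n → Fin n → ℝ) (k : Fin n → ℝ) (p : ℝ)

lemma switchedGen_const_mul_rpow {x : ℝ} (hx : 0 < x) (i : Fin n) :
    switchedGen A B σ q (fun y j => k j * y ^ p) x i = x ^ p * rpowGenFactor A B σ q k p x i := by
  have hsum : ∑ j ∈ Finset.univ.filter (fun j => j ≠ i), q i j * (k j * x ^ p - k i * x ^ p)
      = x ^ p * ∑ j ∈ Finset.univ.filter (fun j => j ≠ i), q i j * (k j - k i) := by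
    rw [Finset.mul_sum]
    exact Finset.sum_congr rfl fun j _ => by ring
  simp only [switchedGen, rpowGenFactor, deriv_const_mul_rpow]
  rw [hsum, rpow_sub_one hx.ne', sub_sub, show (1 : ℝ) + 1 = 2 by norm_num, rpow_sub hx, rpow_two]
  field_simp

lemma continuous_rpowGenFactor (i : Fin n) :
    Continuous fun x => rpowGenFactor A B σ q k p x i := by
  unfold rpowGenFactor
  fun_prop

end rpowGenFactor

lemma rpowGenFactor_zero_neg {n : ℕ} (A B σ : Fin n → ℝ) (q : Fin n → Fin n → ℝ)
    {α : ℝ} (hα : 0 < α) (c : Fin n → ℝ) (i : Fin n) (hc : 0 < 1 + α * c i)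
    (hass : 0 < -B i + ((-α - 1) / 2) * σ i ^ 2
        + ∑ j ∈ Finset.univ.filter (fun j => j ≠ i), q i j * (c i - c j) / (1 + α * c i)) :
    rpowGenFactor A B σ q (fun j => 1 + α * c j) (-α) 0 i < 0 := by
  have hsum : ∑ j ∈ Finset.univ.filter (fun j => j ≠ i), q i j * ((1 + α * c j) - (1 + α * c i))
      = -(α * (1 + α * c i)) *
          ∑ j ∈ Finset.univ.filter (fun j => j ≠ i), q i j * (c i - c j) / (1 + α * c i) := by
    rw [Finset.mul_sum]
    refine Finset.sum_congr rfl fun j _ => ?_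
    field_simp
    ring
  have hfactor : rpowGenFactor A B σ q (fun j => 1 + α * c j) (-α) 0 i
      = -(α * (1 + α * c i)) * (-B i + ((-α - 1) / 2) * σ i ^ 2
        + ∑ j ∈ Finset.univ.filter (fun j => j ≠ i), q i j * (c i - c j) / (1 + α * c i)) := by
    simp only [rpowGenFactor, hsum]
    ring
  rw [hfactor]
  exact mul_neg_of_neg_of_pos (neg_neg_of_pos (mul_pos hα hc)) hass

lemma exists_Ioo_forall_of_eventually_nhdsGT {P : ℝ → Prop} {a b : ℝ} (hab : a < b)
    (h : ∀ᶠ x in 𝓝[>] a, P x) : ∃ δ ∈ Set.Ioo a b, ∀ x ∈ Set.Ioo a δ, P x := by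
  obtain ⟨δ, ⟨haδ, hδ⟩, hsub⟩ :=
    (mem_nhdsGT_iff_exists_mem_Ioc_Ioo_subset (left_lt_add_div_two.2 hab)).1 h
  exact ⟨δ, ⟨haδ, hδ.trans_lt (add_div_two_lt_right.2 hab)⟩, hsub⟩

theorem stmt_5_general {n : ℕ} (A B σ : Fin n → ℝ) (q : Fin n → Fin n → ℝ)
    (α : ℝ) (hα : α ∈ Set.Ioo (0 : ℝ) 1) (c : Fin n → ℝ)
    (hc : ∀ i, 1 + α * c i > 0)
    (hass : ∀ i : Fin n,
      -B i + ((-α - 1) / 2) * σ i ^ 2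
        + ∑ j ∈ Finset.univ.filter (fun j => j ≠ i),
            q i j * (c i - c j) / (1 + α * c i) > 0)
    (V : ℝ → Fin n → ℝ) (hV : V = fun x i => (1 + α * c i) * x ^ (-α)) :
    ∃ δ ∈ Set.Ioo (0 : ℝ) 1, ∀ i : Fin n, ∀ x ∈ Set.Ioo (0 : ℝ) δ,
      switchedGen A B σ q V x i < 0 := by
  have hneg : ∀ᶠ x in 𝓝 0, ∀ i, rpowGenFactor A B σ q (fun j => 1 + α * c j) (-α) x i < 0 :=
    Filter.eventually_all.2 fun i => (continuous_rpowGenFactor A B σ q _ _ i).continuousAt.eventually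
      (gt_mem_nhds (rpowGenFactor_zero_neg A B σ q hα.1 c i (hc i) (hass i)))
  obtain ⟨δ, hδ, hδneg⟩ := exists_Ioo_forall_of_eventually_nhdsGT one_pos (nhdsWithin_le_nhds hneg)
  refine ⟨δ, hδ, fun i x hx => ?_⟩
  rw [hV, switchedGen_const_mul_rpow A B σ q (fun j => 1 + α * c j) (-α) hx.1]
  exact mul_neg_of_pos_of_neg (rpow_pos_of_pos hx.1 _) (hδneg x hx i)

theorem stmt_5 {n : ℕ} (hn : 0 < n) (A B σ : Fin n → ℝ) (q : Fin n → Fin n → ℝ)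
    (hq : ∀ i j : Fin n, i ≠ j → 0 ≤ q i j)
    (α : ℝ) (hα : α ∈ Set.Ioo (0 : ℝ) 1) (c : Fin n → ℝ)
    (hc : ∀ i, 1 + α * c i > 0)
    (hass : ∀ i : Fin n,
      -B i + ((-α - 1) / 2) * σ i ^ 2
        + ∑ j ∈ Finset.univ.filter (fun j => j ≠ i),
            q i j * (c i - c j) / (1 + α * c i) > 0)
    (V : ℝ → Fin n → ℝ) (hV : V = fun x i => (1 + α * c i) * x ^ (-α)) :
    ∃ δ ∈ Set.Ioo (0 : ℝ) 1, ∀ i : Fin n, ∀ x ∈ Set.Ioo (0 : ℝ) δ,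
      switchedGen A B σ q V x i < 0 :=
  stmt_5_general A B σ q α hα c hc hass V hV
end

section
/- Suppose there exist α ∈ (0,1) and real numbers c_1, …, c_n such that for every i ∈ I: 1 − α c_i > 0 and A_i + ((α + 1)/2)·σ_i² + Σ_{j ≠ i} q_{ij}·(c_i − c_j)/(1 − α c_i) < 0 (Assumption (iv), used for instability of the vertex x = 1). Let V(x,i) = (1 − α c_i)·(1 − x)^{−α}. Then there exists δ ∈ (0,1) such that for every i ∈ I and every x ∈ (1 − δ, 1), (L V)(x,i) < 0. -/
open Finset Real Filter Topology

lemma hasDerivAt_one_sub_rpow (p : ℝ) {x : ℝ} (hx : x < 1) :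
    HasDerivAt (fun y : ℝ => (1 - y) ^ p) (-p * (1 - x) ^ (p - 1)) x := by
  have hsub : HasDerivAt (fun y : ℝ => 1 - y) (-1) x := by
    simpa using (hasDerivAt_id x).const_sub 1
  convert hsub.rpow_const (p := p) (Or.inl (sub_pos.mpr hx).ne') using 1
  ring

lemma deriv_const_mul_one_sub_rpow (k p : ℝ) {x : ℝ} (hx : x < 1) :
    deriv (fun y : ℝ => k * (1 - y) ^ p) x = -(k * p) * (1 - x) ^ (p - 1) := by
  rw [((hasDerivAt_one_sub_rpow p hx).const_mul k).deriv]
  ring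

lemma deriv_deriv_const_mul_one_sub_rpow (k p : ℝ) {x : ℝ} (hx : x < 1) :
    deriv (deriv fun y : ℝ => k * (1 - y) ^ p) x = k * p * (p - 1) * (1 - x) ^ (p - 2) := by
  have hderiv : deriv (fun y : ℝ => k * (1 - y) ^ p) =ᶠ[𝓝 x]
      fun y => -(k * p) * (1 - y) ^ (p - 1) := by
    filter_upwards [Iio_mem_nhds hx] with y hy using deriv_const_mul_one_sub_rpow k p hy
  rw [hderiv.deriv_eq, deriv_const_mul_one_sub_rpow _ _ hx, sub_sub, one_add_one_eq_two]
  ring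

noncomputable def vertexOneRate {n : ℕ} (A B σ : Fin n → ℝ) (q : Fin n → Fin n → ℝ) (α : ℝ)
    (c : Fin n → ℝ) (i : Fin n) (x : ℝ) : ℝ :=
  x * (-B i + (A i + B i) * x) + (α + 1) / 2 * σ i ^ 2 * x ^ 2
    + ∑ j ∈ univ.filter (fun j => j ≠ i), q i j * (c i - c j) / (1 - α * c i)

lemma switchedGen_eq_mul_vertexOneRate {n : ℕ} (A B σ : Fin n → ℝ) (q : Fin n → Fin n → ℝ)
    (α : ℝ) (c : Fin n → ℝ) (hc : ∀ i, 1 - α * c i ≠ 0) (i : Fin n) {x : ℝ} (hx : x < 1) :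
    switchedGen A B σ q (fun x i => (1 - α * c i) * (1 - x) ^ (-α)) x i
      = α * (1 - α * c i) * (1 - x) ^ (-α) * vertexOneRate A B σ q α c i x := by
  have hpos : 0 < 1 - x := by linarith
  set r := (1 - x) ^ (-α - 2)
  have hpow1 : (1 - x) ^ (-α - 1) = r * (1 - x) := by
    rw [← rpow_add_one hpos.ne']; ring_nf
  have hpow0 : (1 - x) ^ (-α) = r * (1 - x) ^ 2 := by
    rw [← rpow_two, ← rpow_add hpos]; ring_nf
  have hsum : ∑ j ∈ univ.filter (fun j => j ≠ i),
      q i j * ((1 - α * c j) * (1 - x) ^ (-α) - (1 - α * c i) * (1 - x) ^ (-α))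
        = α * (1 - α * c i) * (1 - x) ^ (-α)
          * ∑ j ∈ univ.filter (fun j => j ≠ i), q i j * (c i - c j) / (1 - α * c i) := by
    rw [mul_sum]
    refine sum_congr rfl fun j _ => ?_
    field_simp [hc i]
    ring
  simp only [switchedGen, vertexOneRate]
  rw [deriv_const_mul_one_sub_rpow _ _ hx, deriv_deriv_const_mul_one_sub_rpow _ _ hx, hsum,
    hpow1, hpow0]
  ring

lemma exists_Ioo_of_eventually_nhdsLT_one {P : ℝ → Prop} (hP : ∀ᶠ x in 𝓝[<] 1, P x) :
    ∃ δ ∈ Set.Ioo (0 : ℝ) 1, ∀ x ∈ Set.Ioo (1 - δ) 1, P x := by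
  obtain ⟨l, ⟨hl, hl1⟩, hsub⟩ :=
    ((TFAE_mem_nhdsLT (by norm_num : (1 / 2 : ℝ) < 1) _).out 0 3).mp hP
  exact ⟨1 - l, ⟨by linarith, by linarith⟩, fun x hx => hsub (by simpa using hx)⟩

theorem stmt_7_general {n : ℕ} (A B σ : Fin n → ℝ) (q : Fin n → Fin n → ℝ)
    (α : ℝ) (hα : α ∈ Set.Ioo (0 : ℝ) 1) (c : Fin n → ℝ)
    (hc : ∀ i, 1 - α * c i > 0)
    (hass : ∀ i : Fin n,
      A i + ((α + 1) / 2) * σ i ^ 2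
        + ∑ j ∈ Finset.univ.filter (fun j => j ≠ i),
            q i j * (c i - c j) / (1 - α * c i) < 0)
    (V : ℝ → Fin n → ℝ) (hV : V = fun x i => (1 - α * c i) * (1 - x) ^ (-α)) :
    ∃ δ ∈ Set.Ioo (0 : ℝ) 1, ∀ i : Fin n, ∀ x ∈ Set.Ioo (1 - δ) 1,
      switchedGen A B σ q V x i < 0 := by
  subst hV
  have hrate : ∀ᶠ x in 𝓝 1, ∀ i, vertexOneRate A B σ q α c i x < 0 := by
    refine Filter.eventually_all.mpr fun i => ?_
    have hcont : Continuous (vertexOneRate A B σ q α c i) := by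
      unfold vertexOneRate; fun_prop
    refine hcont.continuousAt.eventually_lt continuousAt_const ?_
    simpa [vertexOneRate, add_assoc] using hass i
  have hgen : ∀ᶠ x in 𝓝[<] 1, ∀ i,
      switchedGen A B σ q (fun x i => (1 - α * c i) * (1 - x) ^ (-α)) x i < 0 := by
    filter_upwards [self_mem_nhdsWithin, nhdsWithin_le_nhds hrate] with x hx hneg i
    rw [switchedGen_eq_mul_vertexOneRate A B σ q α c (fun i => (hc i).ne') i hx]
    have hpref : 0 < α * (1 - α * c i) * (1 - x) ^ (-α) :=
      mul_pos (mul_pos hα.1 (hc i)) (rpow_pos_of_pos (sub_pos.mpr hx) _)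
    exact mul_neg_of_pos_of_neg hpref (hneg i)
  obtain ⟨δ, hδ, hneg⟩ := exists_Ioo_of_eventually_nhdsLT_one hgen
  exact ⟨δ, hδ, fun i x hx => hneg x hx i⟩

theorem stmt_7 {n : ℕ} (hn : 0 < n) (A B σ : Fin n → ℝ) (q : Fin n → Fin n → ℝ)
    (hq : ∀ i j : Fin n, i ≠ j → 0 ≤ q i j)
    (α : ℝ) (hα : α ∈ Set.Ioo (0 : ℝ) 1) (c : Fin n → ℝ)
    (hc : ∀ i, 1 - α * c i > 0)
    (hass : ∀ i : Fin n,
      A i + ((α + 1) / 2) * σ i ^ 2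
        + ∑ j ∈ Finset.univ.filter (fun j => j ≠ i),
            q i j * (c i - c j) / (1 - α * c i) < 0)
    (V : ℝ → Fin n → ℝ) (hV : V = fun x i => (1 - α * c i) * (1 - x) ^ (-α)) :
    ∃ δ ∈ Set.Ioo (0 : ℝ) 1, ∀ i : Fin n, ∀ x ∈ Set.Ioo (1 - δ) 1,
      switchedGen A B σ q V x i < 0 :=
  stmt_7_general A B σ q α hα c hc hass V hV
end

section
/- If a < c and d > b, then s(t) → 0 as t → ∞ (strategy 2 is dominant: the vertex s = 0 is globally attracting from the interior). -/
open Set Filter Topology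

/-!
Write `p = a - c < 0` and `q = b - d < 0`. The velocity field `x (1 - x) (p x + q (1 - x))`
vanishes at `0` and `1` and is negative in between. Both endpoints are equilibria of a locally
Lipschitz field, so by uniqueness of solutions the trajectory cannot reach them in finite time: it
stays in `(0, 1)`, where it decreases. If it stayed above some `ε > 0`, the velocity on the compact
range `[ε, s 0]` would be bounded away from zero, so `s` would decrease at least linearly and
leave `(0, 1)`.
-/

section AutonomousODE

variable {f s : ℝ → ℝ}

theorem eq_of_hasDerivAt_of_equilibrium {S : Set ℝ} {K : NNReal} {a b : ℝ}
    (hf : LipschitzOnWith K f S) (hab : a ≤ b) (hs : ∀ t ∈ Icc a b, HasDerivAt s (f (s t)) t)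
    (hsS : ∀ t ∈ Icc a b, s t ∈ S) (he : f (s b) = 0) : s a = s b :=
  ODE_solution_unique_of_mem_Icc_left (v := fun _ ↦ f) (s := fun _ ↦ S) (g := fun _ ↦ s b)
    (fun _ _ ↦ hf) (HasDerivAt.continuousOn hs)
    (fun t ht ↦ (hs t (Ioc_subset_Icc_self ht)).hasDerivWithinAt)
    (fun t ht ↦ hsS t (Ioc_subset_Icc_self ht)) continuousOn_const
    (fun t _ ↦ he ▸ hasDerivWithinAt_const t _ _) (fun _ _ ↦ hsS b ⟨hab, le_rfl⟩) rfl
    ⟨le_rfl, hab⟩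

theorem mem_Ioo_of_hasDerivAt_of_equilibria {α β : ℝ} (hf : LocallyLipschitzOn (Icc α β) f)
    (hα : f α = 0) (hβ : f β = 0) (hs : ∀ t ≥ 0, HasDerivAt s (f (s t)) t)
    (h0 : s 0 ∈ Ioo α β) : ∀ t ≥ 0, s t ∈ Ioo α β := by
  by_contra! ⟨t₀, ht₀, hexit⟩
  have hcont : ContinuousOn s (Icc 0 t₀) := HasDerivAt.continuousOn fun t ht ↦ hs t ht.1
  obtain ⟨t₁, ⟨ht₁, hexit₁⟩, hfirst⟩ : ∃ t₁, IsLeast (Icc 0 t₀ ∩ s ⁻¹' (Ioo α β)ᶜ) t₁ :=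
    (isCompact_Icc.of_isClosed_subset
      (hcont.preimage_isClosed_of_isClosed isClosed_Icc isOpen_Ioo.isClosed_compl)
      inter_subset_left).exists_isLeast
      ⟨t₀, mem_inter ⟨ht₀, le_rfl⟩ hexit⟩
  have hbefore : ∀ t ∈ Ico 0 t₁, s t ∈ Ioo α β := fun t ht ↦ by
    by_contra hout
    exact (hfirst ⟨⟨ht.1, ht.2.le.trans ht₁.2⟩, hout⟩).not_gt ht.2
  have ht₁_pos : 0 < t₁ := ht₁.1.lt_of_ne fun h ↦ hexit₁ (h ▸ h0)
  have hst₁ : s t₁ ∈ Icc α β :=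
    isClosed_Icc.mem_of_tendsto
      (((hs t₁ ht₁.1).continuousAt.tendsto).mono_left nhdsWithin_le_nhds : Tendsto s (𝓝[<] t₁) _)
      (by filter_upwards [Ioo_mem_nhdsLT ht₁_pos] with t ht
          exact Ioo_subset_Icc_self (hbefore t ⟨ht.1.le, ht.2⟩))
  have hsIcc : ∀ t ∈ Icc 0 t₁, s t ∈ Icc α β := fun t ht ↦
    ht.2.eq_or_lt.elim (fun h ↦ h ▸ hst₁) fun h ↦ Ioo_subset_Icc_self (hbefore t ⟨ht.1, h⟩)
  have hend : s t₁ = α ∨ s t₁ = β := by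
    have : s t₁ ∈ Icc α β \ Ioo α β := ⟨hst₁, hexit₁⟩
    rwa [Icc_sdiff_Ioo_same (hst₁.1.trans hst₁.2)] at this
  obtain ⟨K, hK⟩ := hf.exists_lipschitzOnWith_of_compact isCompact_Icc
  have hreturn : s 0 = s t₁ :=
    eq_of_hasDerivAt_of_equilibrium hK ht₁.1 (fun t ht ↦ hs t ht.1) hsIcc
      (hend.elim (fun h ↦ h ▸ hα) fun h ↦ h ▸ hβ)
  exact hexit₁ (hreturn ▸ h0)

theorem antitoneOn_Ici_of_hasDerivAt_nonpos {s' : ℝ → ℝ} (hs : ∀ t ≥ 0, HasDerivAt s (s' t) t)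
    (hs' : ∀ t > 0, s' t ≤ 0) : AntitoneOn s (Ici 0) := by
  refine antitoneOn_of_hasDerivWithinAt_nonpos (f' := s') (convex_Ici 0)
    (HasDerivAt.continuousOn hs) (fun t ht ↦ ?_) (fun t ht ↦ ?_)
  · rw [interior_Ici] at ht
    exact (hs t ht.le).hasDerivWithinAt
  · rw [interior_Ici] at ht
    exact hs' t ht

theorem exists_lt_of_hasDerivAt_of_neg {β : ℝ} (hf : ContinuousOn f (Ioo 0 β))
    (hneg : ∀ x ∈ Ioo 0 β, f x < 0) (hs : ∀ t ≥ 0, HasDerivAt s (f (s t)) t)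
    (hmem : ∀ t ≥ 0, s t ∈ Ioo 0 β) {ε : ℝ} (hε : 0 < ε) : ∃ t ≥ 0, s t < ε := by
  by_contra! hlow
  have hanti : AntitoneOn s (Ici 0) :=
    antitoneOn_Ici_of_hasDerivAt_nonpos hs fun t ht ↦ (hneg _ (hmem t ht.le)).le
  have hrange : Icc ε (s 0) ⊆ Ioo 0 β := Icc_subset_Ioo hε (hmem 0 le_rfl).2
  obtain ⟨x₀, hx₀, hmax⟩ := isCompact_Icc.exists_isMaxOn (nonempty_Icc.2 (hlow 0 le_rfl))
    (hf.mono hrange)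
  set δ := -f x₀
  have hδ : 0 < δ := neg_pos.2 (hneg x₀ (hrange hx₀))
  have hlin : AntitoneOn (fun t ↦ s t + δ * t) (Ici 0) := by
    refine antitoneOn_Ici_of_hasDerivAt_nonpos
      (fun t ht ↦ (hs t ht).add ((hasDerivAt_id t).const_mul δ)) fun t ht ↦ ?_
    have : f (s t) ≤ f x₀ := hmax ⟨hlow t ht.le, hanti self_mem_Ici (mem_Ici.2 ht.le) ht.le⟩
    simp only [mul_one]
    linarith
  have hT : 0 ≤ s 0 / δ := div_nonneg (hmem 0 le_rfl).1.le hδ.le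
  have := hlin self_mem_Ici (mem_Ici.2 hT) hT
  simp only [mul_zero, add_zero, mul_div_cancel₀ _ hδ.ne'] at this
  linarith [(hmem _ hT).1]

theorem tendsto_atTop_zero_of_hasDerivAt_of_neg {β : ℝ} (hf : ContinuousOn f (Ioo 0 β))
    (hneg : ∀ x ∈ Ioo 0 β, f x < 0) (hs : ∀ t ≥ 0, HasDerivAt s (f (s t)) t)
    (hmem : ∀ t ≥ 0, s t ∈ Ioo 0 β) : Tendsto s atTop (𝓝 0) := by
  have hanti : AntitoneOn s (Ici 0) :=
    antitoneOn_Ici_of_hasDerivAt_nonpos hs fun t ht ↦ (hneg _ (hmem t ht.le)).le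
  refine tendsto_order.2 ⟨fun ε hε ↦ ?_, fun ε hε ↦ ?_⟩
  · filter_upwards [eventually_ge_atTop 0] with t ht
    exact hε.trans (hmem t ht).1
  · obtain ⟨T, hT, hsT⟩ := exists_lt_of_hasDerivAt_of_neg hf hneg hs hmem hε
    filter_upwards [eventually_ge_atTop T] with t ht
    exact (hanti (mem_Ici.2 hT) (mem_Ici.2 (hT.trans ht)) ht).trans_lt hsT

end AutonomousODE

def replicatorField (p q x : ℝ) : ℝ := x * (1 - x) * (p * x + q * (1 - x))

theorem contDiff_replicatorField (p q : ℝ) : ContDiff ℝ 1 (replicatorField p q) := by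
  unfold replicatorField
  fun_prop

theorem replicatorField_neg {p q x : ℝ} (hp : p < 0) (hq : q < 0) (hx : x ∈ Ioo 0 1) :
    replicatorField p q x < 0 := by
  have h1x : 0 < 1 - x := sub_pos.2 hx.2
  have hfit : p * x + q * (1 - x) < 0 := by nlinarith [hx.1]
  exact mul_neg_of_pos_of_neg (mul_pos hx.1 h1x) hfit

theorem stmt_11 (a b c d : ℝ) (hac : a < c) (hdb : d > b)
    (s : ℝ → ℝ) (hs : Differentiable ℝ s)
    (hode : ∀ t ≥ (0 : ℝ), deriv s t =
      s t * (1 - s t) * ((a - c) * s t + (b - d) * (1 - s t)))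
    (h0 : s 0 ∈ Set.Ioo (0 : ℝ) 1) :
    Filter.Tendsto s Filter.atTop (nhds 0) := by
  have hderiv : ∀ t ≥ 0, HasDerivAt s (replicatorField (a - c) (b - d) (s t)) t :=
    fun t ht ↦ (hs t).hasDerivAt.congr_deriv (hode t ht)
  have hf := contDiff_replicatorField (a - c) (b - d)
  have hmem := mem_Ioo_of_hasDerivAt_of_equilibria hf.locallyLipschitz.locallyLipschitzOn
    (by simp [replicatorField]) (by simp [replicatorField]) hderiv h0
  exact tendsto_atTop_zero_of_hasDerivAt_of_neg hf.continuous.continuousOn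
    (fun x hx ↦ replicatorField_neg (sub_neg.2 hac) (sub_neg.2 hdb) hx) hderiv hmem
end
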